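/- Mean waiting time formula for monotonic SOAP policies: E[Q] = ∫₀^∞ τ(z_x)/(ρ̄(y_x)ρ̄(z_x)) dF(x) equals ∫₀^∞ [ (F̄(y_x)/ρ̄(y_x) + F̄(z_x)/ρ̄(z_x)) · λτ(z_x)F̄(x)/ρ̄(x)² + λx F̄(y_x)F̄(x)/ρ̄(y_x)² ] dx, where (y, z) is a hill-valley pair, ρ̄(a) = 1 − λ∫₀ᵃ F̄(t) dt, and τ(a) = λ∫₀ᵃ tF̄(t) dt. -/

import Mathlib

/-!
Write `R = ρ̄`, `T = τ`, `F̄ = 1 - F` and `Ψ = F̄ T / R²` (`boundaryTerm`). On a hill the difference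
of the two integrands is `Ψ'`. On a valley `(a, b]` it is a constant multiple `c · F̄ / R²` plus the
derivative of an explicit combination of `T` and `F`, and `F̄ / R² = (1 / (λ R))'`. So every segment
contributes `Ψ(right end) - Ψ(left end)`, the integral over `(0, u N]` telescopes to `Ψ (u N)`, and
`Ψ (u N) → 0` by the decay hypothesis.

The catch is that `R` may vanish, and there Lean's `x / 0 = 0` makes the integrands vanish too.
Integrability forbids `R` from tending to `0` on an interval where it is non-zero: on a valley with
`c ≠ 0` because `1 / R` would have an integrable derivative, on a hill because `log |R|` would
(there the integrand is quadratic in `F̄ / R` and dominates `λ |F̄ / R|` up to a constant). Hence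
on each segment `R` vanishes either nowhere or identically, and in the latter case both sides
are `0`.
-/

open MeasureTheory

/-- `ρ̄(a) = 1 − λ∫₀ᵃ F̄(t) dt`, where `F̄ = 1 − F`. -/
noncomputable def rhoBar (F : ℝ → ℝ) (lam a : ℝ) : ℝ :=
  1 - lam * ∫ t in (0:ℝ)..a, (1 - F t)

/-- `τ(a) = λ∫₀ᵃ t F̄(t) dt`, where `F̄ = 1 − F`. -/
noncomputable def tauFn (F : ℝ → ℝ) (lam a : ℝ) : ℝ :=
  lam * ∫ t in (0:ℝ)..a, t * (1 - F t)

/-- A hill-valley partition `0 = u₀ ≤ v₀ < u₁ < v₁ < u₂ < …` of `ℝ≥0`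
together with a hill-valley pair `(y, z)`: on a valley `(uᵢ, vᵢ]`, `y x = uᵢ`
and `z x = vᵢ`; on a hill, `y x = z x = x`. -/
structure HillValleyPair (u v : ℕ → ℝ) (y z : ℝ → ℝ) : Prop where
  u_zero : u 0 = 0
  uv_zero : u 0 ≤ v 0
  v_lt_u : ∀ i, v i < u (i + 1)
  u_lt_v : ∀ i, u (i + 1) < v (i + 1)
  u_tendsto : Filter.Tendsto u Filter.atTop Filter.atTop
  valley : ∀ i, ∀ x ∈ Set.Ioc (u i) (v i), y x = u i ∧ z x = v i
  hill : ∀ i, ∀ x ∈ Set.Ioc (v i) (u (i + 1)), y x = x ∧ z x = x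
  y_zero : y 0 = 0
  z_zero : z 0 = v 0

open Set Filter Topology

lemma forall_Icc_eq_zero_or_forall_Icc_ne_zero {R : ℝ → ℝ} (hR : Continuous R) {a b : ℝ}
    (hext : ∀ p q, a ≤ p → p < q → q ≤ b → (∀ x ∈ Ioo p q, R x ≠ 0) → ∀ x ∈ Icc p q, R x ≠ 0) :
    (∀ x ∈ Icc a b, R x = 0) ∨ ∀ x ∈ Icc a b, R x ≠ 0 := by
  by_contra! h
  obtain ⟨⟨x₁, hx₁, hR₁⟩, ⟨x₀, hx₀, hR₀⟩⟩ := h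
  -- a zero `c` nearest to `x₁`; then `R` has no zero strictly between `c` and `x₁`
  obtain ⟨c, ⟨hc, hRc⟩, hmin⟩ :=
    (isCompact_Icc.inter_right (isClosed_singleton.preimage hR)).exists_isMinOn
      ⟨x₀, hx₀, hR₀⟩ (continuous_id.sub continuous_const).abs.continuousOn (f := fun x => |x - x₁|)
  have hnear : ∀ x ∈ Ioo (min c x₁) (max c x₁), R x ≠ 0 := by
    intro x hx hRx
    have hxab : x ∈ Icc a b :=
      ⟨(le_min hc.1 hx₁.1).trans hx.1.le, hx.2.le.trans (max_le hc.2 hx₁.2)⟩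
    have hcx : |c - x₁| ≤ |x - x₁| := hmin ⟨hxab, hRx⟩
    cases abs_cases (c - x₁) <;> cases abs_cases (x - x₁) <;> cases min_cases c x₁ <;>
      cases max_cases c x₁ <;> linarith [hx.1, hx.2]
  have hne : min c x₁ < max c x₁ := min_lt_max.2 fun h => hR₁ (h ▸ hRc)
  exact hext _ _ (le_min hc.1 hx₁.1) hne (max_le hc.2 hx₁.2) hnear c
    ⟨min_le_left _ _, le_max_left _ _⟩ hRc

lemma ne_zero_of_one_le_mul_abs {R : ℝ → ℝ} (hR : Continuous R) {p q M : ℝ} (hpq : p < q)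
    (hbound : ∀ x ∈ Ioo p q, 1 ≤ M * |R x|) : ∀ x ∈ Icc p q, R x ≠ 0 := by
  have hclosed : IsClosed {x | 1 ≤ M * |R x|} :=
    isClosed_le continuous_const (continuous_const.mul (continuous_abs.comp hR))
  intro x hx hRx
  have := hclosed.closure_subset_iff.2 hbound (closure_Ioo hpq.ne ▸ hx)
  norm_num [hRx] at this

lemma exists_abs_le_of_hasDerivAt {f f' : ℝ → ℝ} {p q : ℝ} (hpq : p < q)
    (hderiv : ∀ x ∈ Ioo p q, HasDerivAt f (f' x) x) (hint : IntegrableOn f' (Ioo p q)) :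
    ∃ M, ∀ x ∈ Ioo p q, |f x| ≤ M := by
  obtain ⟨s, hs⟩ := nonempty_Ioo.2 hpq
  refine ⟨|f s| + ∫ x in Ioo p q, |f' x|, fun t ht => ?_⟩
  have hsub : uIcc s t ⊆ Ioo p q := ordConnected_Ioo.uIcc_subset hs ht
  have hftc : ∫ x in s..t, f' x = f t - f s :=
    intervalIntegral.integral_eq_sub_of_hasDerivAt (fun x hx => hderiv x (hsub hx))
      (intervalIntegrable_iff.2 (hint.mono_set (uIoc_subset_uIcc.trans hsub)))
  have hle : |∫ x in s..t, f' x| ≤ ∫ x in Ioo p q, |f' x| :=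
    intervalIntegral.norm_integral_le_integral_norm_uIoc.trans <|
      setIntegral_mono_set hint.norm (ae_of_all _ fun _ => norm_nonneg _)
        (uIoc_subset_uIcc.trans hsub).eventuallyLE
  rw [hftc] at hle
  linarith [abs_sub_abs_le_abs_sub (f t) (f s)]

lemma hasDerivAt_rhoBar {F : ℝ → ℝ} (hF : Continuous F) (lam x : ℝ) :
    HasDerivAt (rhoBar F lam) (-(lam * (1 - F x))) x := by
  have hB : Continuous fun t => 1 - F t := continuous_const.sub hF
  exact ((intervalIntegral.integral_hasDerivAt_right (hB.intervalIntegrable 0 x)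
    (hB.stronglyMeasurableAtFilter _ _) hB.continuousAt).const_mul lam).const_sub 1

lemma hasDerivAt_tauFn {F : ℝ → ℝ} (hF : Continuous F) (lam x : ℝ) :
    HasDerivAt (tauFn F lam) (lam * (x * (1 - F x))) x := by
  have hB : Continuous fun t => t * (1 - F t) := continuous_id.mul (continuous_const.sub hF)
  exact (intervalIntegral.integral_hasDerivAt_right (hB.intervalIntegrable 0 x)
    (hB.stronglyMeasurableAtFilter _ _) hB.continuousAt).const_mul lam

lemma continuous_rhoBar {F : ℝ → ℝ} (hF : Continuous F) (lam : ℝ) :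
    Continuous (rhoBar F lam) :=
  continuous_iff_continuousAt.2 fun x => (hasDerivAt_rhoBar hF lam x).continuousAt

@[simp] lemma rhoBar_zero (F : ℝ → ℝ) (lam : ℝ) : rhoBar F lam 0 = 1 := by
  simp [rhoBar]

@[simp] lemma tauFn_zero (F : ℝ → ℝ) (lam : ℝ) : tauFn F lam 0 = 0 := by
  simp [tauFn]

noncomputable def phi (F : ℝ → ℝ) (lam u v : ℝ) : ℝ :=
  tauFn F lam v / (rhoBar F lam u * rhoBar F lam v)

noncomputable def byPartsIntegrand (F : ℝ → ℝ) (lam u v x : ℝ) : ℝ :=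
  ((1 - F u) / rhoBar F lam u + (1 - F v) / rhoBar F lam v)
      * (lam * tauFn F lam v * (1 - F x) / (rhoBar F lam x) ^ 2)
    + lam * x * (1 - F u) * (1 - F x) / (rhoBar F lam u) ^ 2

noncomputable def boundaryTerm (F : ℝ → ℝ) (lam x : ℝ) : ℝ :=
  (1 - F x) * phi F lam x x

@[simp] lemma boundaryTerm_zero (F : ℝ → ℝ) (lam : ℝ) : boundaryTerm F lam 0 = 0 := by
  simp [boundaryTerm, phi]

section
variable {F : ℝ → ℝ} {lam : ℝ}

lemma hasDerivAt_boundaryTerm (hF : Differentiable ℝ F) {x : ℝ} (hx : rhoBar F lam x ≠ 0) :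
    HasDerivAt (boundaryTerm F lam)
      (byPartsIntegrand F lam x x x - phi F lam x x * deriv F x) x := by
  have hB : HasDerivAt (fun y => 1 - F y) (-deriv F x) x := (hF x).hasDerivAt.const_sub 1
  have h := (hB.fun_mul (hasDerivAt_tauFn hF.continuous lam x)).fun_div
    ((hasDerivAt_rhoBar hF.continuous lam x).fun_pow 2) (pow_ne_zero 2 hx)
  have hfun : boundaryTerm F lam = fun y => (1 - F y) * tauFn F lam y / rhoBar F lam y ^ 2 := by
    funext y
    simp only [boundaryTerm, phi]
    ring
  rw [hfun]
  refine h.congr_deriv ?_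
  simp only [byPartsIntegrand, phi]
  field_simp
  ring

lemma byPartsIntegrand_diag (x : ℝ) :
    byPartsIntegrand F lam x x x = lam * x * ((1 - F x) / rhoBar F lam x) ^ 2
      + 2 * lam * ((1 - F x) / rhoBar F lam x) * boundaryTerm F lam x := by
  simp only [byPartsIntegrand, boundaryTerm, phi]
  ring

-- On the diagonal `byPartsIntegrand` is quadratic in `g = F̄ / ρ̄` with leading coefficient
-- `λx ≥ λp`; the constant comes from AM-GM.
lemma mul_abs_div_rhoBar_le_byPartsIntegrand (hlam : 0 ≤ lam) {p x M : ℝ} (hp : 0 < p)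
    (hpx : p ≤ x) (hM : |boundaryTerm F lam x| ≤ M) :
    lam * |(1 - F x) / rhoBar F lam x|
      ≤ byPartsIntegrand F lam x x x + lam * ((2 * M + 1) ^ 2 / (4 * p)) := by
  set C := (2 * M + 1) ^ 2 / (4 * p)
  set g := (1 - F x) / rhoBar F lam x
  have hΨ : -(|g| * M) ≤ g * boundaryTerm F lam x := by
    have := (abs_mul g _).le.trans (mul_le_mul_of_nonneg_left hM (abs_nonneg g))
    linarith [neg_abs_le (g * boundaryTerm F lam x)]
  have hpx : p * g ^ 2 ≤ x * g ^ 2 := mul_le_mul_of_nonneg_right hpx (sq_nonneg g)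
  have hamgm : |g| ≤ p * g ^ 2 - 2 * M * |g| + C := by
    have hsq : 4 * p * (p * g ^ 2 - 2 * M * |g| + C - |g|) = (2 * p * |g| - (2 * M + 1)) ^ 2 := by
      rw [← sq_abs g]
      simp only [C]
      field_simp
      ring
    have := (mul_nonneg_iff_of_pos_left (by positivity : (0:ℝ) < 4 * p)).1 (hsq ▸ sq_nonneg _)
    linarith
  rw [byPartsIntegrand_diag]
  nlinarith

lemma rhoBar_ne_zero_of_integrableOn_div_sq (hF : Continuous F) {p q : ℝ}
    (hpq : p < q) (hR : ∀ x ∈ Ioo p q, rhoBar F lam x ≠ 0)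
    (hint : IntegrableOn (fun x => (1 - F x) / rhoBar F lam x ^ 2) (Ioo p q)) :
    ∀ x ∈ Icc p q, rhoBar F lam x ≠ 0 := by
  obtain ⟨M, hM⟩ := exists_abs_le_of_hasDerivAt hpq (f := fun x => (rhoBar F lam x)⁻¹)
    (fun x hx => ((hasDerivAt_rhoBar hF lam x).inv (hR x hx)).congr_deriv (by ring))
    (hint.const_mul lam)
  refine ne_zero_of_one_le_mul_abs (continuous_rhoBar hF lam) hpq (M := M) fun x hx => ?_
  rw [← inv_le_iff_one_le_mul₀ (abs_pos.2 (hR x hx)), ← abs_inv]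
  exact hM x hx

lemma rhoBar_ne_zero_of_integrableOn_hill (hF : Differentiable ℝ F) (hlam : 0 < lam) {p q : ℝ}
    (hp : 0 < p) (hpq : p < q) (hR : ∀ x ∈ Ioo p q, rhoBar F lam x ≠ 0)
    (hr : IntegrableOn (fun x => byPartsIntegrand F lam x x x) (Ioo p q))
    (hl : IntegrableOn (fun x => phi F lam x x * deriv F x) (Ioo p q)) :
    ∀ x ∈ Icc p q, rhoBar F lam x ≠ 0 := by
  obtain ⟨M, hM⟩ := exists_abs_le_of_hasDerivAt hpq
    (fun x hx => hasDerivAt_boundaryTerm hF (hR x hx)) (hr.sub hl)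
  set C := (2 * M + 1) ^ 2 / (4 * p)
  have hdom (x : ℝ) (hx : x ∈ Ioo p q) :=
    mul_abs_div_rhoBar_le_byPartsIntegrand hlam.le hp hx.1.le (hM x hx)
  have hlog : IntegrableOn (fun x => -(lam * (1 - F x)) / rhoBar F lam x) (Ioo p q) := by
    refine Integrable.mono' (hr.add (integrableOn_const (C := lam * C) measure_Ioo_lt_top.ne))
      ?_ (ae_restrict_of_forall_mem measurableSet_Ioo fun x hx => ?_)
    · refine ContinuousOn.aestronglyMeasurable ?_ measurableSet_Ioo
      exact (continuous_const.mul (continuous_const.sub hF.continuous)).neg.continuousOn.div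
        (continuous_rhoBar hF.continuous lam).continuousOn hR
    · rw [Real.norm_eq_abs, neg_div, abs_neg, mul_div_assoc, abs_mul, abs_of_pos hlam]
      exact hdom x hx
  obtain ⟨M', hM'⟩ := exists_abs_le_of_hasDerivAt hpq
    (fun x hx => (hasDerivAt_rhoBar hF.continuous lam x).log (hR x hx)) hlog
  refine ne_zero_of_one_le_mul_abs (continuous_rhoBar hF.continuous lam) hpq
    (M := Real.exp M') fun x hx => ?_
  have hexp : Real.exp (-M') ≤ |rhoBar F lam x| := by
    rw [← Real.exp_log (abs_pos.2 (hR x hx)), Real.log_abs]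
    exact Real.exp_le_exp.2 (by linarith [neg_abs_le (Real.log (rhoBar F lam x)), hM' x hx])
  calc 1 = Real.exp M' * Real.exp (-M') := by rw [← Real.exp_add, add_neg_cancel, Real.exp_zero]
    _ ≤ Real.exp M' * |rhoBar F lam x| := by gcongr

lemma integral_const_mul_div_rhoBar_sq (hF : Continuous F) (hlam : lam ≠ 0) {a b c : ℝ}
    (hab : a ≤ b)
    (hint : IntegrableOn (fun x => c * ((1 - F x) / rhoBar F lam x ^ 2)) (Ioc a b)) :
    ∫ x in a..b, c * ((1 - F x) / rhoBar F lam x ^ 2)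
      = c / lam * ((rhoBar F lam b)⁻¹ - (rhoBar F lam a)⁻¹) := by
  rcases eq_or_ne c 0 with rfl | hc
  · simp
  have hint' : IntegrableOn (fun x => (1 - F x) / rhoBar F lam x ^ 2) (Ioc a b) := by
    simpa [IntegrableOn, hc] using hint.const_mul c⁻¹
  have hext (p q : ℝ) (hap : a ≤ p) (hpq : p < q) (hqb : q ≤ b)
      (hR : ∀ x ∈ Ioo p q, rhoBar F lam x ≠ 0) : ∀ x ∈ Icc p q, rhoBar F lam x ≠ 0 :=
    rhoBar_ne_zero_of_integrableOn_div_sq hF hpq hR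
      (hint'.mono_set fun x hx => ⟨hap.trans_lt hx.1, hx.2.le.trans hqb⟩)
  rcases forall_Icc_eq_zero_or_forall_Icc_ne_zero (continuous_rhoBar hF lam) hext with h0 | hne
  · rw [intervalIntegral.integral_congr (g := fun _ => 0) fun x hx => ?_]
    · simp [h0 a ⟨le_rfl, hab⟩, h0 b ⟨hab, le_rfl⟩]
    · simp [h0 x (uIcc_of_le hab ▸ hx)]
  · rw [intervalIntegral.integral_eq_sub_of_hasDerivAt
      (f := fun x => c / lam * (rhoBar F lam x)⁻¹) (fun x hx => ?_)
      ((intervalIntegrable_iff_integrableOn_Ioc_of_le hab).2 hint), mul_sub]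
    refine (((hasDerivAt_rhoBar hF lam x).inv (hne x (uIcc_of_le hab ▸ hx))).const_mul
      (c / lam)).congr_deriv ?_
    field_simp

lemma integral_sub_valley (hF : Differentiable ℝ F) (hlam : lam ≠ 0) {a b : ℝ} (hab : a ≤ b)
    (hr : IntegrableOn (byPartsIntegrand F lam a b) (Ioc a b))
    (hl : IntegrableOn (fun x => phi F lam a b * deriv F x) (Ioc a b)) :
    ∫ x in a..b, (byPartsIntegrand F lam a b x - phi F lam a b * deriv F x)
      = boundaryTerm F lam b - boundaryTerm F lam a := by
  set c := ((1 - F a) / rhoBar F lam a + (1 - F b) / rhoBar F lam b) * tauFn F lam b * lam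
  set w := fun x => lam * x * (1 - F a) * (1 - F x) / rhoBar F lam a ^ 2
  have hsplit (x : ℝ) : byPartsIntegrand F lam a b x
      = c * ((1 - F x) / rhoBar F lam x ^ 2) + w x := by
    simp only [byPartsIntegrand, c, w]
    ring
  have hw : Continuous w := by
    have := hF.continuous
    fun_prop
  have hcint : IntegrableOn (fun x => c * ((1 - F x) / rhoBar F lam x ^ 2)) (Ioc a b) := by
    refine (hr.sub hw.integrableOn_Ioc).congr_fun (fun x _ => ?_) measurableSet_Ioc
    simp only [hsplit, Pi.sub_apply, add_sub_cancel_right]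
  have hwl : IntervalIntegrable (fun x => w x - phi F lam a b * deriv F x) volume a b :=
    (hw.intervalIntegrable a b).sub ((intervalIntegrable_iff_integrableOn_Ioc_of_le hab).2 hl)
  have hreg : ∫ x in a..b, (w x - phi F lam a b * deriv F x)
      = ((1 - F a) / rhoBar F lam a ^ 2 * tauFn F lam b - phi F lam a b * F b)
        - ((1 - F a) / rhoBar F lam a ^ 2 * tauFn F lam a - phi F lam a b * F a) := by
    refine intervalIntegral.integral_eq_sub_of_hasDerivAt
      (f := fun x => (1 - F a) / rhoBar F lam a ^ 2 * tauFn F lam x - phi F lam a b * F x)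
      (fun x _ => ?_) hwl
    refine (((hasDerivAt_tauFn hF.continuous lam x).const_mul _).sub
      ((hF x).hasDerivAt.const_mul _)).congr_deriv ?_
    simp only [w]
    ring
  calc ∫ x in a..b, (byPartsIntegrand F lam a b x - phi F lam a b * deriv F x)
      = (∫ x in a..b, c * ((1 - F x) / rhoBar F lam x ^ 2))
        + ∫ x in a..b, (w x - phi F lam a b * deriv F x) := by
        rw [← intervalIntegral.integral_add
          ((intervalIntegrable_iff_integrableOn_Ioc_of_le hab).2 hcint) hwl]
        refine intervalIntegral.integral_congr fun x _ => ?_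
        simp only [hsplit]
        ring
    _ = boundaryTerm F lam b - boundaryTerm F lam a := by
        rw [integral_const_mul_div_rhoBar_sq hF.continuous hlam hab hcint, hreg]
        simp only [c, mul_div_cancel_right₀ _ hlam, boundaryTerm, phi]
        ring

lemma integral_sub_hill (hF : Differentiable ℝ F) (hlam : 0 < lam) {a b : ℝ} (ha : 0 ≤ a)
    (hab : a ≤ b)
    (hr : IntegrableOn (fun x => byPartsIntegrand F lam x x x) (Ioc a b))
    (hl : IntegrableOn (fun x => phi F lam x x * deriv F x) (Ioc a b)) :
    ∫ x in a..b, (byPartsIntegrand F lam x x x - phi F lam x x * deriv F x)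
      = boundaryTerm F lam b - boundaryTerm F lam a := by
  have hext (p q : ℝ) (hap : a ≤ p) (hpq : p < q) (hqb : q ≤ b)
      (hR : ∀ x ∈ Ioo p q, rhoBar F lam x ≠ 0) : ∀ x ∈ Icc p q, rhoBar F lam x ≠ 0 := by
    have hsub {p'} (hp' : p ≤ p') : Ioo p' q ⊆ Ioc a b :=
      fun x hx => ⟨(hap.trans hp').trans_lt hx.1, hx.2.le.trans hqb⟩
    have hblow {p'} (hp' : 0 < p') (hpp' : p ≤ p') (hp'q : p' < q) :=
      rhoBar_ne_zero_of_integrableOn_hill hF hlam hp' hp'q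
        (fun x hx => hR x ⟨hpp'.trans_lt hx.1, hx.2⟩) (hr.mono_set (hsub hpp'))
        (hl.mono_set (hsub hpp'))
    rcases (ha.trans hap).eq_or_lt with rfl | hp
    · -- near `0` the bound degenerates, but `ρ̄(0) = 1`
      rintro x ⟨hx0, hxq⟩
      rcases hx0.eq_or_lt with rfl | hx0
      · simp
      · exact hblow (half_pos hx0) (half_pos hx0).le (by linarith) x ⟨by linarith, hxq⟩
    · exact hblow hp le_rfl hpq
  rcases forall_Icc_eq_zero_or_forall_Icc_ne_zero (continuous_rhoBar hF.continuous lam) hext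
    with h0 | hne
  · rw [intervalIntegral.integral_congr (g := fun _ => 0) fun x hx => ?_]
    · simp [boundaryTerm, phi, h0 a ⟨le_rfl, hab⟩, h0 b ⟨hab, le_rfl⟩]
    · simp [byPartsIntegrand, phi, h0 x (uIcc_of_le hab ▸ hx)]
  · exact intervalIntegral.integral_eq_sub_of_hasDerivAt
      (fun x hx => hasDerivAt_boundaryTerm hF (hne x (uIcc_of_le hab ▸ hx)))
      ((intervalIntegrable_iff_integrableOn_Ioc_of_le hab).2 (hr.sub hl))
end

namespace HillValleyPair

variable {u v : ℕ → ℝ} {y z : ℝ → ℝ} {F : ℝ → ℝ} {lam : ℝ}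

lemma u_le_v (hvp : HillValleyPair u v y z) : ∀ i, u i ≤ v i
  | 0 => hvp.uv_zero
  | i + 1 => (hvp.u_lt_v i).le

lemma monotone_u (hvp : HillValleyPair u v y z) : Monotone u :=
  monotone_nat_of_le_succ fun i => (hvp.u_le_v i).trans (hvp.v_lt_u i).le

lemma zero_le_u (hvp : HillValleyPair u v y z) (i : ℕ) : 0 ≤ u i :=
  hvp.u_zero ▸ hvp.monotone_u (Nat.zero_le i)

lemma zero_le_v (hvp : HillValleyPair u v y z) (i : ℕ) : 0 ≤ v i :=
  (hvp.zero_le_u i).trans (hvp.u_le_v i)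

lemma eqOn_valley (hvp : HillValleyPair u v y z) (G : ℝ → ℝ → ℝ → ℝ) (i : ℕ) :
    EqOn (fun x => G (y x) (z x) x) (G (u i) (v i)) (Ioc (u i) (v i)) := fun x hx => by
  simp only [(hvp.valley i x hx).1, (hvp.valley i x hx).2]

lemma eqOn_hill (hvp : HillValleyPair u v y z) (G : ℝ → ℝ → ℝ → ℝ) (i : ℕ) :
    EqOn (fun x => G (y x) (z x) x) (fun x => G x x x) (Ioc (v i) (u (i + 1))) := fun x hx => by
  simp only [(hvp.hill i x hx).1, (hvp.hill i x hx).2]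

lemma integral_Ioi_eq_sub (hvp : HillValleyPair u v y z) {D Ψ : ℝ → ℝ} {L : ℝ}
    (hD : IntegrableOn D (Ioi 0))
    (hvalley : ∀ i, ∫ x in u i..v i, D x = Ψ (v i) - Ψ (u i))
    (hhill : ∀ i, ∫ x in v i..u (i + 1), D x = Ψ (u (i + 1)) - Ψ (v i))
    (hΨ : Tendsto (fun N => Ψ (u N)) atTop (𝓝 L)) :
    ∫ x in Ioi 0, D x = L - Ψ 0 := by
  have hii {s t : ℝ} (hs : 0 ≤ s) (ht : 0 ≤ t) : IntervalIntegrable D volume s t :=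
    intervalIntegrable_iff.2 (hD.mono_set fun x hx => (le_min hs ht).trans_lt hx.1)
  have htel (N : ℕ) : ∫ x in (0 : ℝ)..u N, D x = Ψ (u N) - Ψ 0 := by
    induction N with
    | zero => simp [hvp.u_zero]
    | succ n ih =>
      rw [← intervalIntegral.integral_add_adjacent_intervals (b := v n)
          (hii le_rfl (hvp.zero_le_v n)) (hii (hvp.zero_le_v n) (hvp.zero_le_u _)),
        ← intervalIntegral.integral_add_adjacent_intervals (b := u n)
          (hii le_rfl (hvp.zero_le_u n)) (hii (hvp.zero_le_u n) (hvp.zero_le_v n)),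
        ih, hvalley, hhill]
      ring
  refine tendsto_nhds_unique (intervalIntegral_tendsto_integral_Ioi 0 hD hvp.u_tendsto) ?_
  simpa only [htel] using hΨ.sub_const (Ψ 0)

lemma integral_valley (hvp : HillValleyPair u v y z) (hF : Differentiable ℝ F) (hlam : lam ≠ 0)
    (hr : IntegrableOn (fun x => byPartsIntegrand F lam (y x) (z x) x) (Ioi 0))
    (hl : IntegrableOn (fun x => phi F lam (y x) (z x) * deriv F x) (Ioi 0)) (i : ℕ) :
    ∫ x in u i..v i, (byPartsIntegrand F lam (y x) (z x) x - phi F lam (y x) (z x) * deriv F x)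
      = boundaryTerm F lam (v i) - boundaryTerm F lam (u i) := by
  have hsub : Ioc (u i) (v i) ⊆ Ioi 0 := fun x hx => (hvp.zero_le_u i).trans_lt hx.1
  rw [intervalIntegral.integral_congr_ae (ae_of_all _ fun x hx =>
    hvp.eqOn_valley (fun a b x => byPartsIntegrand F lam a b x - phi F lam a b * deriv F x) i
      (uIoc_of_le (hvp.u_le_v i) ▸ hx))]
  exact integral_sub_valley hF hlam (hvp.u_le_v i)
    ((hr.mono_set hsub).congr_fun (hvp.eqOn_valley (byPartsIntegrand F lam) i) measurableSet_Ioc)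
    ((hl.mono_set hsub).congr_fun (hvp.eqOn_valley (fun a b x => phi F lam a b * deriv F x) i)
      measurableSet_Ioc)

lemma integral_hill (hvp : HillValleyPair u v y z) (hF : Differentiable ℝ F) (hlam : 0 < lam)
    (hr : IntegrableOn (fun x => byPartsIntegrand F lam (y x) (z x) x) (Ioi 0))
    (hl : IntegrableOn (fun x => phi F lam (y x) (z x) * deriv F x) (Ioi 0)) (i : ℕ) :
    ∫ x in v i..u (i + 1),
        (byPartsIntegrand F lam (y x) (z x) x - phi F lam (y x) (z x) * deriv F x)
      = boundaryTerm F lam (u (i + 1)) - boundaryTerm F lam (v i) := by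
  have hsub : Ioc (v i) (u (i + 1)) ⊆ Ioi 0 := fun x hx => (hvp.zero_le_v i).trans_lt hx.1
  rw [intervalIntegral.integral_congr_ae (ae_of_all _ fun x hx =>
    hvp.eqOn_hill (fun a b x => byPartsIntegrand F lam a b x - phi F lam a b * deriv F x) i
      (uIoc_of_le (hvp.v_lt_u i).le ▸ hx))]
  exact integral_sub_hill hF hlam (hvp.zero_le_v i) (hvp.v_lt_u i).le
    ((hr.mono_set hsub).congr_fun (hvp.eqOn_hill (byPartsIntegrand F lam) i) measurableSet_Ioc)
    ((hl.mono_set hsub).congr_fun (hvp.eqOn_hill (fun a b x => phi F lam a b * deriv F x) i)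
      measurableSet_Ioc)

end HillValleyPair

theorem mean_waiting_time_formula_general (F : ℝ → ℝ) (hF : Differentiable ℝ F)
    (lam : ℝ) (hlam : 0 < lam)
    (u v : ℕ → ℝ) (y z : ℝ → ℝ) (hvp : HillValleyPair u v y z)
    (hlim : Filter.Tendsto
      (fun x => (1 - F x) * tauFn F lam (z x) / (rhoBar F lam (y x) * rhoBar F lam (z x)))
      Filter.atTop (nhds 0))
    (hint1 : IntegrableOn
      (fun x => tauFn F lam (z x) / (rhoBar F lam (y x) * rhoBar F lam (z x)) * deriv F x)
      (Set.Ioi 0))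
    (hint2 : IntegrableOn (fun x =>
        ((1 - F (y x)) / rhoBar F lam (y x) + (1 - F (z x)) / rhoBar F lam (z x))
          * (lam * tauFn F lam (z x) * (1 - F x) / (rhoBar F lam x) ^ 2)
        + lam * x * (1 - F (y x)) * (1 - F x) / (rhoBar F lam (y x)) ^ 2)
      (Set.Ioi 0)) :
    ∫ x in Set.Ioi (0:ℝ),
        tauFn F lam (z x) / (rhoBar F lam (y x) * rhoBar F lam (z x)) * deriv F x
      = ∫ x in Set.Ioi (0:ℝ),
          (((1 - F (y x)) / rhoBar F lam (y x) + (1 - F (z x)) / rhoBar F lam (z x))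
            * (lam * tauFn F lam (z x) * (1 - F x) / (rhoBar F lam x) ^ 2)
          + lam * x * (1 - F (y x)) * (1 - F x) / (rhoBar F lam (y x)) ^ 2) := by
  -- the right endpoints `u (n + 1)` of the hills are points where `y = z = id`
  have hboundary : Tendsto (fun N => boundaryTerm F lam (u N)) atTop (𝓝 0) := by
    refine (hlim.comp hvp.u_tendsto).congr' ((eventually_ge_atTop 1).mono fun N hN => ?_)
    obtain ⟨n, rfl⟩ := Nat.exists_eq_add_of_le' hN
    obtain ⟨hy, hz⟩ := hvp.hill n (u (n + 1)) ⟨hvp.v_lt_u n, le_rfl⟩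
    simp only [Function.comp_apply, boundaryTerm, phi, hy, hz, mul_div_assoc]
  have h := hvp.integral_Ioi_eq_sub
    (D := fun x => byPartsIntegrand F lam (y x) (z x) x - phi F lam (y x) (z x) * deriv F x)
    (hint2.sub hint1) (hvp.integral_valley hF hlam.ne' hint2 hint1)
    (hvp.integral_hill hF hlam hint2 hint1) hboundary
  rw [boundaryTerm_zero, sub_zero] at h
  exact (sub_eq_zero.1 ((integral_sub hint2 hint1).symm.trans h)).symm

/-- Mean waiting time formula for monotonic SOAP policies:
`E[Q] = ∫₀^∞ τ(z_x)/(ρ̄(y_x)ρ̄(z_x)) dF(x)` equals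
`∫₀^∞ [(F̄(y_x)/ρ̄(y_x) + F̄(z_x)/ρ̄(z_x)) · λτ(z_x)F̄(x)/ρ̄(x)²
  + λx F̄(y_x)F̄(x)/ρ̄(y_x)²] dx`. -/
theorem mean_waiting_time_formula (F : ℝ → ℝ) (hF : Differentiable ℝ F)
    (lam : ℝ) (hlam : 0 < lam)
    (hintF : IntegrableOn (fun t => 1 - F t) (Set.Ioi 0))
    (hρ : lam * ∫ t in Set.Ioi (0:ℝ), (1 - F t) < 1)
    (u v : ℕ → ℝ) (y z : ℝ → ℝ) (hvp : HillValleyPair u v y z)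
    (hlim : Filter.Tendsto
      (fun x => (1 - F x) * tauFn F lam (z x) / (rhoBar F lam (y x) * rhoBar F lam (z x)))
      Filter.atTop (nhds 0))
    (hint1 : IntegrableOn
      (fun x => tauFn F lam (z x) / (rhoBar F lam (y x) * rhoBar F lam (z x)) * deriv F x)
      (Set.Ioi 0))
    (hint2 : IntegrableOn (fun x =>
        ((1 - F (y x)) / rhoBar F lam (y x) + (1 - F (z x)) / rhoBar F lam (z x))
          * (lam * tauFn F lam (z x) * (1 - F x) / (rhoBar F lam x) ^ 2)
        + lam * x * (1 - F (y x)) * (1 - F x) / (rhoBar F lam (y x)) ^ 2)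
      (Set.Ioi 0)) :
    ∫ x in Set.Ioi (0:ℝ),
        tauFn F lam (z x) / (rhoBar F lam (y x) * rhoBar F lam (z x)) * deriv F x
      = ∫ x in Set.Ioi (0:ℝ),
          (((1 - F (y x)) / rhoBar F lam (y x) + (1 - F (z x)) / rhoBar F lam (z x))
            * (lam * tauFn F lam (z x) * (1 - F x) / (rhoBar F lam x) ^ 2)
          + lam * x * (1 - F (y x)) * (1 - F x) / (rhoBar F lam (y x)) ^ 2) :=
  mean_waiting_time_formula_general F hF lam hlam u v y z hvp hlim hint1 hint2
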